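/- Let G be a finite group and B a finite set. Then the poset CS(G×B) of G-invariant cross-sections in the set-partition poset SP(G×B) is order-isomorphic to the poset Rh⁰_B(G) of SPCs on B over G. Explicitly, the map sending an invariant cross-section (G×B', Π) to the SPC (B', {B₁,…,Bₙ}, [f]) — where the Bᵢ are the subsets of B' determined by the G-orbits of Π-classes and fᵢ : Bᵢ → G is the partial function whose reversed graph is a chosen Π-class πᵢ with Gπᵢ a partition of G×Bᵢ — is a well-defined order isomorphism, with inverse sending (B', Θ, [f]) to (G×B', Π) where Π consists of all sets g·{(f(b), b) : b ∈ θ} for Θ-classes θ and g ∈ G. -/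

import Mathlib

/-- The left `G`-action on subsets of `G × B`: `g · Y = {(g h, b) : (h, b) ∈ Y}`. -/
def gAct {G B : Type} [Mul G] (g : G) (Y : Set (G × B)) : Set (G × B) :=
  (fun p : G × B => (g * p.1, p.2)) '' Y

/-- Left `G`-translation of a set of pairs in `B × G` (graphs of functions to `G`):
`(g · f)(b) = g · f(b)`. -/
def gTranslate {G B : Type} [Mul G] (g : G) (γ : Set (B × G)) : Set (B × G) :=
  (fun p : B × G => (p.1, g * p.2)) '' γ

/-- `C` is a partition of `Y`: a collection of nonempty pairwise disjoint sets
whose union is `Y`. -/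
def IsPartitionOf {α : Type} (C : Set (Set α)) (Y : Set α) : Prop :=
  (∀ c ∈ C, c.Nonempty) ∧ C.PairwiseDisjoint id ∧ ⋃₀ C = Y

/-- `(Y, P)` is a `G`-invariant cross-section in `SP(G × B)`: `P` is a partition
of `Y`, the pair is invariant under the `G`-action, and every class of `P` is a
cross-section (contains at most one element over each `b ∈ B`). -/
def IsInvariantCrossSection {G B : Type} [Group G]
    (Y : Set (G × B)) (P : Set (Set (G × B))) : Prop :=
  IsPartitionOf P Y ∧
  (∀ g : G, gAct g Y = Y ∧ (gAct g) '' P = P) ∧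
  (∀ π ∈ P, ∀ p ∈ π, ∀ q ∈ π, p.2 = q.2 → p.1 = q.1)

/-- `c` is a cross-section with domain `θ`: a `G`-orbit of (graphs of) functions
`θ → G` under left translation. -/
def IsCrossSectionClass {G B : Type} [Group G] (θ : Set B) (c : Set (Set (B × G))) : Prop :=
  c.Nonempty ∧
  (∀ γ ∈ c, ∃ f : B → G, γ = {p : B × G | p.1 ∈ θ ∧ p.2 = f p.1}) ∧
  (∀ γ ∈ c, ∀ g : G, gTranslate g γ ∈ c) ∧
  (∀ γ₁ ∈ c, ∀ γ₂ ∈ c, ∃ g : G, γ₂ = gTranslate g γ₁)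

/-- `(I, Θ, F)` is an SPC on `B` over `G`: `Θ` is a partition of `I ⊆ B` and `F`
assigns to each `Θ`-class `θ` a cross-section with domain `θ` (and `∅` to
non-classes, a normalization making the representation unique). -/
def IsSPC {G B : Type} [Group G]
    (I : Set B) (Θ : Set (Set B)) (F : Set B → Set (Set (B × G))) : Prop :=
  IsPartitionOf Θ I ∧
  (∀ θ ∈ Θ, IsCrossSectionClass θ (F θ)) ∧
  (∀ θ : Set B, θ ∉ Θ → F θ = ∅)

/-- The order on set-partition pairs: containment of sets and refinement of classes. -/
def SPle {G B : Type} (Y : Set (G × B)) (P : Set (Set (G × B)))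
    (Z : Set (G × B)) (Q : Set (Set (G × B))) : Prop :=
  Y ⊆ Z ∧ ∀ π ∈ P, ∃ ϑ ∈ Q, π ⊆ ϑ

/-- Restriction of a cross-section class to a smaller domain `θ`. -/
def restrictClass {G B : Type} (θ : Set B) (c : Set (Set (B × G))) : Set (Set (B × G)) :=
  (fun γ : Set (B × G) => {p ∈ γ | p.1 ∈ θ}) '' c

/-- The order on SPCs on `B` over `G`. -/
def SPCle {G B : Type} [Group G]
    (I : Set B) (Θ : Set (Set B)) (F : Set B → Set (Set (B × G)))
    (J : Set B) (τ : Set (Set B)) (H : Set B → Set (Set (B × G))) : Prop :=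
  I ⊆ J ∧
  (∀ θ ∈ Θ, ∃ τ' ∈ τ, θ ⊆ τ') ∧
  (∀ θ ∈ Θ, ∀ τ' ∈ τ, θ ⊆ τ' → restrictClass θ (H τ') = F θ)

/-- The map `CS(G×B) → Rh⁰_B(G)`: sends an invariant cross-section `(Y, P)` to the
SPC whose subset is the projection of `Y`, whose partition classes are the
projections of the `P`-classes, and whose cross-section at `θ` is the set of
reversed graphs of the `P`-classes projecting onto `θ`. -/
def csToSPC {G B : Type} (Y : Set (G × B)) (P : Set (Set (G × B))) :
    Set B × Set (Set B) × (Set B → Set (Set (B × G))) :=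
  (Prod.snd '' Y,
   (fun π : Set (G × B) => Prod.snd '' π) '' P,
   fun θ : Set B =>
     {γ : Set (B × G) | ∃ π ∈ P, Prod.snd '' π = θ ∧ γ = Prod.swap '' π})

/-- The map `Rh⁰_B(G) → CS(G×B)`: sends an SPC `(I, Θ, F)` to the pair whose set is
`G × I` and whose partition classes are the reversed graphs `g·{(f(b), b) : b ∈ θ}`
of all members of the cross-section classes. -/
def spcToCS {G B : Type} (I : Set B) (Θ : Set (Set B))
    (F : Set B → Set (Set (B × G))) :
    Set (G × B) × Set (Set (G × B)) :=
  ({p : G × B | p.2 ∈ I},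
   {π : Set (G × B) | ∃ θ ∈ Θ, ∃ γ ∈ F θ, π = Prod.swap '' γ})

/-!
Invariance under `G` forces an invariant cross-section `(Y, P)` to be saturated,
`Y = G × B'`, and forces any two classes whose projections to `B` meet to be `G`-translates
of each other; so the projections of the classes partition `B'`, and the classes lying over
one block form a single `G`-orbit. Being a cross-section, each class is the reversed graph
of a function on its block, so that orbit is exactly a cross-section with that domain.
Conversely the translates of graphs of an SPC can only meet when they coincide, so they
partition `G × B'`. For the order, a class contained in a larger cross-section class is
recovered from it by restricting to its own projection, which is how refinement of classes
becomes restriction of cross-sections.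
-/

open Set

section Graphs

variable {α β : Type}

lemma image_swap_image_swap (s : Set (α × β)) : Prod.swap '' (Prod.swap '' s) = s := by
  simp [image_image]

lemma mem_image_swap {s : Set (α × β)} {p : β × α} :
    p ∈ Prod.swap '' s ↔ p.swap ∈ s := by
  rw [image_swap_eq_preimage_swap, mem_preimage]

lemma image_snd_image_swap (s : Set (α × β)) :
    Prod.snd '' (Prod.swap '' s) = Prod.fst '' s := by
  simp [image_image]

lemma sep_image_swap (s : Set (α × β)) (θ : Set β) :
    {p ∈ Prod.swap '' s | p.1 ∈ θ} = Prod.swap '' {q ∈ s | q.2 ∈ θ} := by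
  ext p
  exact (and_congr_left' mem_image_swap).trans (mem_image_swap (s := {q ∈ s | q.2 ∈ θ})).symm

lemma image_fst_graph (θ : Set β) (f : β → α) :
    Prod.fst '' {p : β × α | p.1 ∈ θ ∧ p.2 = f p.1} = θ := by
  ext b
  exact ⟨fun ⟨p, hp, hpb⟩ => hpb ▸ hp.1, fun hb => ⟨(b, f b), ⟨hb, rfl⟩, rfl⟩⟩

lemma exists_image_swap_eq_graph [Nonempty α] {π : Set (α × β)}
    (hπ : ∀ p ∈ π, ∀ q ∈ π, p.2 = q.2 → p.1 = q.1) :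
    ∃ f : β → α,
      Prod.swap '' π = {p : β × α | p.1 ∈ Prod.snd '' π ∧ p.2 = f p.1} := by
  classical
  refine ⟨fun b => if h : ∃ a, (a, b) ∈ π then h.choose else Classical.arbitrary α, ?_⟩
  ext ⟨b, a⟩
  simp only [mem_image_swap, Prod.swap_prod_mk, mem_ofPred_eq]
  constructor
  · intro hab
    have hex : ∃ a', (a', b) ∈ π := ⟨a, hab⟩
    exact ⟨⟨_, hab, rfl⟩, by rw [dif_pos hex]; exact hπ _ hab _ hex.choose_spec rfl⟩
  · rintro ⟨⟨⟨a', b'⟩, hab', rfl⟩, ha⟩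
    have hex : ∃ a, (a, b') ∈ π := ⟨a', hab'⟩
    rw [ha, dif_pos hex]
    exact hex.choose_spec

lemma sep_snd_mem_image_snd_eq {π ϑ : Set (α × β)}
    (hϑ : ∀ p ∈ ϑ, ∀ q ∈ ϑ, p.2 = q.2 → p.1 = q.1) (hπϑ : π ⊆ ϑ) :
    {q ∈ ϑ | q.2 ∈ Prod.snd '' π} = π := by
  refine subset_antisymm ?_ fun q hq => ⟨hπϑ hq, q, hq, rfl⟩
  rintro q ⟨hq, r, hr, hrq⟩
  rwa [Prod.ext (hϑ q hq r (hπϑ hr) hrq.symm) hrq.symm]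

end Graphs

variable {G B : Type} [Group G]

section Actions

@[simp]
lemma mem_gAct {g : G} {Y : Set (G × B)} {p : G × B} :
    p ∈ gAct g Y ↔ (g⁻¹ * p.1, p.2) ∈ Y := by
  constructor
  · rintro ⟨q, hq, rfl⟩
    simpa using hq
  · exact fun h => ⟨_, h, by simp⟩

@[simp]
lemma mem_gTranslate {g : G} {γ : Set (B × G)} {p : B × G} :
    p ∈ gTranslate g γ ↔ (p.1, g⁻¹ * p.2) ∈ γ := by
  constructor
  · rintro ⟨q, hq, rfl⟩
    simpa using hq
  · exact fun h => ⟨_, h, by simp⟩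

lemma gAct_gAct (g h : G) (Y : Set (G × B)) : gAct g (gAct h Y) = gAct (g * h) Y := by
  ext; simp [mul_assoc]

lemma gAct_one (Y : Set (G × B)) : gAct 1 Y = Y := by
  ext; simp

lemma gTranslate_gTranslate (g h : G) (γ : Set (B × G)) :
    gTranslate g (gTranslate h γ) = gTranslate (g * h) γ := by
  ext; simp [mul_assoc]

lemma gTranslate_one (γ : Set (B × G)) : gTranslate 1 γ = γ := by
  ext; simp

lemma gTranslate_graph (g : G) (θ : Set B) (f : B → G) :
    gTranslate g {p : B × G | p.1 ∈ θ ∧ p.2 = f p.1} =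
      {p : B × G | p.1 ∈ θ ∧ p.2 = g * f p.1} := by
  ext; simp [inv_mul_eq_iff_eq_mul]

lemma image_snd_gAct (g : G) (Y : Set (G × B)) : Prod.snd '' gAct g Y = Prod.snd '' Y := by
  simp [gAct, image_image]

lemma image_swap_gAct (g : G) (Y : Set (G × B)) :
    Prod.swap '' gAct g Y = gTranslate g (Prod.swap '' Y) := by
  simp [gAct, gTranslate, image_image]

lemma gAct_image_swap (g : G) (γ : Set (B × G)) :
    gAct g (Prod.swap '' γ) = Prod.swap '' gTranslate g γ := by
  simp [gAct, gTranslate, image_image]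

lemma image_gAct_eq_of_forall_gAct_mem {P : Set (Set (G × B))}
    (hP : ∀ g : G, ∀ π ∈ P, gAct g π ∈ P) (g : G) : gAct g '' P = P := by
  refine (image_subset_iff.2 fun π hπ => hP g π hπ).antisymm fun π hπ => ?_
  exact ⟨gAct g⁻¹ π, hP _ π hπ, by rw [gAct_gAct, mul_inv_cancel, gAct_one]⟩

end Actions

section CrossSectionClass

variable {θ : Set B} {c : Set (Set (B × G))}

lemma isCrossSectionClass_range_gTranslate_graph (θ : Set B) (f : B → G) :
    IsCrossSectionClass θ
      (range fun g : G => gTranslate g {p : B × G | p.1 ∈ θ ∧ p.2 = f p.1}) := by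
  refine ⟨range_nonempty _, ?_, ?_, ?_⟩
  · rintro _ ⟨g, rfl⟩
    exact ⟨fun b => g * f b, gTranslate_graph g θ f⟩
  · rintro _ ⟨h, rfl⟩ g
    exact ⟨g * h, (gTranslate_gTranslate g h _).symm⟩
  · rintro _ ⟨g₁, rfl⟩ _ ⟨g₂, rfl⟩
    exact ⟨g₂ * g₁⁻¹, by rw [gTranslate_gTranslate, inv_mul_cancel_right]⟩

lemma IsCrossSectionClass.image_fst (hc : IsCrossSectionClass θ c) {γ : Set (B × G)}
    (hγ : γ ∈ c) : Prod.fst '' γ = θ := by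
  obtain ⟨f, rfl⟩ := hc.2.1 γ hγ
  exact image_fst_graph θ f

lemma IsCrossSectionClass.exists_mem (hc : IsCrossSectionClass θ c) {b : B} (hb : b ∈ θ)
    (g : G) : ∃ γ ∈ c, (b, g) ∈ γ := by
  obtain ⟨γ, hγ⟩ := hc.1
  obtain ⟨f, rfl⟩ := hc.2.1 γ hγ
  refine ⟨_, hc.2.2.1 _ hγ (g * (f b)⁻¹), ?_⟩
  simp [hb]

lemma IsCrossSectionClass.eq_of_mem_of_mem (hc : IsCrossSectionClass θ c)
    {γ₁ γ₂ : Set (B × G)} (h₁ : γ₁ ∈ c) (h₂ : γ₂ ∈ c) {p : B × G}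
    (hp₁ : p ∈ γ₁) (hp₂ : p ∈ γ₂) : γ₁ = γ₂ := by
  obtain ⟨g, rfl⟩ := hc.2.2.2 γ₁ h₁ γ₂ h₂
  obtain ⟨f, rfl⟩ := hc.2.1 γ₁ h₁
  rw [mem_gTranslate] at hp₂
  have hg : g⁻¹ * p.2 = p.2 := hp₂.2.trans hp₁.2.symm
  rw [mul_eq_right, inv_eq_one] at hg
  rw [hg, gTranslate_one]

end CrossSectionClass

namespace IsInvariantCrossSection

variable {Y Y' : Set (G × B)} {P P' : Set (Set (G × B))}

lemma gAct_mem (hCS : IsInvariantCrossSection Y P) {π : Set (G × B)} (hπ : π ∈ P) (g : G) :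
    gAct g π ∈ P :=
  (hCS.2.1 g).2 ▸ mem_image_of_mem _ hπ

lemma eq_preimage_image_snd (hCS : IsInvariantCrossSection Y P) :
    Y = Prod.snd ⁻¹' (Prod.snd '' Y) := by
  refine subset_antisymm (subset_preimage_image _ _) ?_
  rintro p ⟨q, hq, hqp⟩
  rw [← (hCS.2.1 (p.1 * q.1⁻¹)).1, mem_gAct]
  simpa [← hqp] using hq

lemma exists_eq_gAct (hCS : IsInvariantCrossSection Y P) {π₁ π₂ : Set (G × B)}
    (h₁ : π₁ ∈ P) (h₂ : π₂ ∈ P) {b : B} (hb₁ : b ∈ Prod.snd '' π₁)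
    (hb₂ : b ∈ Prod.snd '' π₂) : ∃ g : G, π₂ = gAct g π₁ := by
  obtain ⟨⟨g₁, b⟩, hp₁, rfl⟩ := hb₁
  obtain ⟨⟨g₂, b⟩, hp₂, rfl⟩ := hb₂
  refine ⟨g₂ * g₁⁻¹, hCS.1.2.1.elim_set h₂ (hCS.gAct_mem h₁ _) (g₂, b) hp₂ ?_⟩
  simpa [mul_assoc] using hp₁

lemma image_snd_eq (hCS : IsInvariantCrossSection Y P) {π₁ π₂ : Set (G × B)}
    (h₁ : π₁ ∈ P) (h₂ : π₂ ∈ P) {b : B} (hb₁ : b ∈ Prod.snd '' π₁)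
    (hb₂ : b ∈ Prod.snd '' π₂) : Prod.snd '' π₁ = Prod.snd '' π₂ := by
  obtain ⟨g, rfl⟩ := hCS.exists_eq_gAct h₁ h₂ hb₁ hb₂
  exact (image_snd_gAct g π₁).symm

lemma csToSPC_cross_eq_range (hCS : IsInvariantCrossSection Y P) {π : Set (G × B)}
    (hπ : π ∈ P) :
    (csToSPC Y P).2.2 (Prod.snd '' π) =
      range fun g : G => gTranslate g (Prod.swap '' π) := by
  ext γ
  constructor
  · rintro ⟨π', hπ', hproj, rfl⟩
    obtain ⟨b, hb⟩ := (hCS.1.1 π' hπ').image Prod.snd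
    obtain ⟨g, rfl⟩ := hCS.exists_eq_gAct hπ hπ' (hproj ▸ hb) hb
    exact ⟨g, (image_swap_gAct g π).symm⟩
  · rintro ⟨g, rfl⟩
    exact ⟨gAct g π, hCS.gAct_mem hπ g, image_snd_gAct g π, (image_swap_gAct g π).symm⟩

lemma isPartitionOf_image_snd (hCS : IsInvariantCrossSection Y P) :
    IsPartitionOf ((fun π : Set (G × B) => Prod.snd '' π) '' P) (Prod.snd '' Y) := by
  refine ⟨?_, ?_, ?_⟩
  · rintro _ ⟨π, hπ, rfl⟩
    exact (hCS.1.1 π hπ).image _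
  · rintro _ ⟨π₁, h₁, rfl⟩ _ ⟨π₂, h₂, rfl⟩ hne
    exact disjoint_left.2 fun b hb₁ hb₂ => hne (hCS.image_snd_eq h₁ h₂ hb₁ hb₂)
  · rw [← hCS.1.2.2, image_sUnion]

lemma isSPC_csToSPC (hCS : IsInvariantCrossSection Y P) :
    IsSPC (csToSPC Y P).1 (csToSPC Y P).2.1 (csToSPC Y P).2.2 := by
  refine ⟨hCS.isPartitionOf_image_snd, ?_, fun θ hθ => ?_⟩
  · rintro _ ⟨π, hπ, rfl⟩
    obtain ⟨f, hf⟩ := exists_image_swap_eq_graph (hCS.2.2 π hπ)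
    rw [hCS.csToSPC_cross_eq_range hπ, hf]
    exact isCrossSectionClass_range_gTranslate_graph _ f
  · refine eq_empty_of_forall_notMem ?_
    rintro _ ⟨π, hπ, rfl, rfl⟩
    exact hθ ⟨π, hπ, rfl⟩

lemma spcToCS_csToSPC (hCS : IsInvariantCrossSection Y P) :
    spcToCS (csToSPC Y P).1 (csToSPC Y P).2.1 (csToSPC Y P).2.2 = (Y, P) := by
  refine Prod.ext hCS.eq_preimage_image_snd.symm (subset_antisymm ?_ fun π hπ => ?_)
  · rintro _ ⟨_, _, _, ⟨π, hπ, _, rfl⟩, rfl⟩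
    rwa [image_swap_image_swap]
  · exact ⟨_, ⟨π, hπ, rfl⟩, _, ⟨π, hπ, rfl, rfl⟩, (image_swap_image_swap π).symm⟩

lemma restrictClass_csToSPC_cross (hCS : IsInvariantCrossSection Y P)
    (hCS' : IsInvariantCrossSection Y' P') {π ϑ : Set (G × B)} (hπ : π ∈ P) (hϑ : ϑ ∈ P')
    (hπϑ : π ⊆ ϑ) :
    restrictClass (Prod.snd '' π) ((csToSPC Y' P').2.2 (Prod.snd '' ϑ)) =
      (csToSPC Y P).2.2 (Prod.snd '' π) := by
  rw [hCS.csToSPC_cross_eq_range hπ, hCS'.csToSPC_cross_eq_range hϑ, restrictClass,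
    ← range_comp]
  congr 1
  funext g
  rw [Function.comp_apply, ← image_swap_gAct, sep_image_swap, ← image_swap_gAct,
    ← image_snd_gAct g π,
    sep_snd_mem_image_snd_eq (hCS'.2.2 _ (hCS'.gAct_mem hϑ g)) (π := gAct g π)
      (image_mono hπϑ)]

lemma spcle_csToSPC_of_sple (hCS : IsInvariantCrossSection Y P)
    (hCS' : IsInvariantCrossSection Y' P') (h : SPle Y P Y' P') :
    SPCle (csToSPC Y P).1 (csToSPC Y P).2.1 (csToSPC Y P).2.2
      (csToSPC Y' P').1 (csToSPC Y' P').2.1 (csToSPC Y' P').2.2 := by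
  refine ⟨image_mono h.1, ?_, ?_⟩
  · rintro _ ⟨π, hπ, rfl⟩
    obtain ⟨ϑ, hϑ, hπϑ⟩ := h.2 π hπ
    exact ⟨_, ⟨ϑ, hϑ, rfl⟩, image_mono hπϑ⟩
  · rintro _ ⟨π, hπ, rfl⟩ _ ⟨ϑ₁, hϑ₁, rfl⟩ hsub
    dsimp only at hsub ⊢
    obtain ⟨ϑ, hϑ, hπϑ⟩ := h.2 π hπ
    obtain ⟨b, hb⟩ := (hCS.1.1 π hπ).image Prod.snd
    rw [← hCS'.image_snd_eq hϑ hϑ₁ (image_mono hπϑ hb) (hsub hb)]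
    exact hCS.restrictClass_csToSPC_cross hCS' hπ hϑ hπϑ

lemma sple_of_spcle (hCS' : IsInvariantCrossSection Y' P')
    (h : SPCle (csToSPC Y P).1 (csToSPC Y P).2.1 (csToSPC Y P).2.2
      (csToSPC Y' P').1 (csToSPC Y' P').2.1 (csToSPC Y' P').2.2) :
    SPle Y P Y' P' := by
  obtain ⟨hYY', hrefine, hrestrict⟩ := h
  refine ⟨fun p hp => ?_, fun π hπ => ?_⟩
  · rw [hCS'.eq_preimage_image_snd]
    exact hYY' ⟨p, hp, rfl⟩
  · obtain ⟨_, ⟨ϑ₁, hϑ₁, rfl⟩, hsub⟩ := hrefine _ ⟨π, hπ, rfl⟩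
    have hmem : Prod.swap '' π ∈ (csToSPC Y P).2.2 (Prod.snd '' π) := ⟨π, hπ, rfl, rfl⟩
    rw [← hrestrict _ ⟨π, hπ, rfl⟩ _ ⟨ϑ₁, hϑ₁, rfl⟩ hsub] at hmem
    obtain ⟨_, ⟨ϑ, hϑ, -, rfl⟩, hϑπ⟩ := hmem
    refine ⟨ϑ, hϑ, fun p hp => ?_⟩
    have hp' : p.swap ∈ Prod.swap '' π := mem_image_of_mem _ hp
    rw [← hϑπ] at hp'
    exact mem_image_swap.1 hp'.1

end IsInvariantCrossSection

namespace IsSPC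

variable {I : Set B} {Θ : Set (Set B)} {F : Set B → Set (Set (B × G))}

lemma mem_of_mem_cross (hS : IsSPC I Θ F) {θ : Set B} {γ : Set (B × G)} (hγ : γ ∈ F θ) :
    θ ∈ Θ := by
  by_contra hθ
  rw [hS.2.2 θ hθ] at hγ
  exact hγ

lemma image_snd_mem_of_mem_spcToCS (hS : IsSPC I Θ F) {π : Set (G × B)}
    (hπ : π ∈ (spcToCS I Θ F).2) :
    Prod.snd '' π ∈ Θ ∧ Prod.swap '' π ∈ F (Prod.snd '' π) := by
  obtain ⟨θ, hθ, γ, hγ, rfl⟩ := hπ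
  rw [image_swap_image_swap, image_snd_image_swap, (hS.2.1 θ hθ).image_fst hγ]
  exact ⟨hθ, hγ⟩

lemma image_swap_mem_spcToCS (hS : IsSPC I Θ F) {θ : Set B} {γ : Set (B × G)}
    (hγ : γ ∈ F θ) :
    Prod.swap '' γ ∈ (spcToCS I Θ F).2 ∧ Prod.snd '' (Prod.swap '' γ) = θ := by
  have hθ := hS.mem_of_mem_cross hγ
  rw [image_snd_image_swap, (hS.2.1 θ hθ).image_fst hγ]
  exact ⟨⟨θ, hθ, γ, hγ, rfl⟩, rfl⟩

lemma isPartitionOf_spcToCS (hS : IsSPC I Θ F) :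
    IsPartitionOf (spcToCS I Θ F).2 (spcToCS I Θ F).1 := by
  refine ⟨?_, fun π₁ h₁ π₂ h₂ hne => disjoint_left.2 fun q hq₁ hq₂ => hne ?_, ?_⟩
  · exact fun π hπ => (hS.1.1 _ (hS.image_snd_mem_of_mem_spcToCS hπ).1).of_image
  · obtain ⟨hθ₁, hγ₁⟩ := hS.image_snd_mem_of_mem_spcToCS h₁
    obtain ⟨hθ₂, hγ₂⟩ := hS.image_snd_mem_of_mem_spcToCS h₂
    have hθ : Prod.snd '' π₁ = Prod.snd '' π₂ :=
      hS.1.2.1.elim_set hθ₁ hθ₂ q.2 ⟨q, hq₁, rfl⟩ ⟨q, hq₂, rfl⟩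
    rw [hθ] at hγ₁
    have hγ := (hS.2.1 _ hθ₂).eq_of_mem_of_mem hγ₁ hγ₂
      (mem_image_swap.2 (q.swap_swap.symm ▸ hq₁))
      (mem_image_swap.2 (q.swap_swap.symm ▸ hq₂))
    rw [← image_swap_image_swap π₁, hγ, image_swap_image_swap]
  · ext q
    constructor
    · rintro ⟨π, hπ, hq⟩
      show q.2 ∈ I
      rw [← hS.1.2.2]
      exact ⟨_, (hS.image_snd_mem_of_mem_spcToCS hπ).1, q, hq, rfl⟩
    · intro hq
      obtain ⟨θ, hθ, hqθ⟩ := hS.1.2.2.symm ▸ hq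
      obtain ⟨γ, hγ, hqγ⟩ := (hS.2.1 θ hθ).exists_mem hqθ q.1
      exact ⟨_, (hS.image_swap_mem_spcToCS hγ).1, mem_image_swap.2 hqγ⟩

lemma isInvariantCrossSection_spcToCS (hS : IsSPC I Θ F) :
    IsInvariantCrossSection (spcToCS I Θ F).1 (spcToCS I Θ F).2 := by
  refine ⟨hS.isPartitionOf_spcToCS, fun g => ⟨?_, ?_⟩, ?_⟩
  · ext; simp [spcToCS]
  · refine image_gAct_eq_of_forall_gAct_mem (fun g => ?_) g
    rintro _ ⟨θ, hθ, γ, hγ, rfl⟩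
    exact ⟨θ, hθ, _, (hS.2.1 θ hθ).2.2.1 γ hγ g, gAct_image_swap g γ⟩
  · rintro _ ⟨θ, hθ, γ, hγ, rfl⟩ p hp q hq hpq
    obtain ⟨f, rfl⟩ := (hS.2.1 θ hθ).2.1 γ hγ
    rw [mem_image_swap] at hp hq
    rw [show p.1 = f p.2 from hp.2, show q.1 = f q.2 from hq.2, hpq]

lemma csToSPC_spcToCS (hS : IsSPC I Θ F) :
    csToSPC (spcToCS I Θ F).1 (spcToCS I Θ F).2 = (I, Θ, F) := by
  refine Prod.ext ?_ (Prod.ext ?_ ?_)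
  · ext b
    exact ⟨fun ⟨p, hp, hpb⟩ => hpb ▸ hp, fun hb => ⟨(1, b), hb, rfl⟩⟩
  · ext θ
    constructor
    · rintro ⟨π, hπ, rfl⟩
      exact (hS.image_snd_mem_of_mem_spcToCS hπ).1
    · intro hθ
      obtain ⟨γ, hγ⟩ := (hS.2.1 θ hθ).1
      exact ⟨_, hS.image_swap_mem_spcToCS hγ⟩
  · funext θ
    ext γ
    constructor
    · rintro ⟨π, hπ, rfl, rfl⟩
      exact (hS.image_snd_mem_of_mem_spcToCS hπ).2
    · intro hγ
      obtain ⟨hπ, hθ⟩ := hS.image_swap_mem_spcToCS hγ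
      exact ⟨_, hπ, hθ, (image_swap_image_swap γ).symm⟩

end IsSPC

theorem cs_orderIso_rhodes_general (G B : Type) [Group G] :
    -- well-definedness of the forward map
    (∀ (Y : Set (G × B)) (P : Set (Set (G × B))), IsInvariantCrossSection Y P →
      IsSPC (csToSPC Y P).1 (csToSPC Y P).2.1 (csToSPC Y P).2.2) ∧
    -- well-definedness of the inverse map
    (∀ (I : Set B) (Θ : Set (Set B)) (F : Set B → Set (Set (B × G))), IsSPC I Θ F →
      IsInvariantCrossSection (spcToCS I Θ F).1 (spcToCS I Θ F).2) ∧
    -- the two maps are mutually inverse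
    (∀ (Y : Set (G × B)) (P : Set (Set (G × B))), IsInvariantCrossSection Y P →
      spcToCS (csToSPC Y P).1 (csToSPC Y P).2.1 (csToSPC Y P).2.2 = (Y, P)) ∧
    (∀ (I : Set B) (Θ : Set (Set B)) (F : Set B → Set (Set (B × G))), IsSPC I Θ F →
      csToSPC (spcToCS I Θ F).1 (spcToCS I Θ F).2 = (I, Θ, F)) ∧
    -- the forward map is an order isomorphism
    (∀ (Y : Set (G × B)) (P : Set (Set (G × B)))
       (Y' : Set (G × B)) (P' : Set (Set (G × B))),
      IsInvariantCrossSection Y P → IsInvariantCrossSection Y' P' →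
        (SPle Y P Y' P' ↔
          SPCle (csToSPC Y P).1 (csToSPC Y P).2.1 (csToSPC Y P).2.2
            (csToSPC Y' P').1 (csToSPC Y' P').2.1 (csToSPC Y' P').2.2)) :=
  ⟨fun _ _ hCS => hCS.isSPC_csToSPC,
    fun _ _ _ hS => hS.isInvariantCrossSection_spcToCS,
    fun _ _ hCS => hCS.spcToCS_csToSPC,
    fun _ _ _ hS => hS.csToSPC_spcToCS,
    fun _ _ _ _ hCS hCS' => ⟨hCS.spcle_csToSPC_of_sple hCS', hCS'.sple_of_spcle⟩⟩

/-- `CS(G×B)` is order-isomorphic to the poset `Rh⁰_B(G)` of SPCs on `B`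
over `G`, via the explicit map `csToSPC` with explicit inverse `spcToCS`:
both maps are well defined, mutually inverse, and `csToSPC` is an order embedding
onto `Rh⁰_B(G)`, hence an order isomorphism. -/
theorem cs_orderIso_rhodes (G B : Type) [Group G] [Finite G] [Finite B] :
    -- well-definedness of the forward map
    (∀ (Y : Set (G × B)) (P : Set (Set (G × B))), IsInvariantCrossSection Y P →
      IsSPC (csToSPC Y P).1 (csToSPC Y P).2.1 (csToSPC Y P).2.2) ∧
    -- well-definedness of the inverse map
    (∀ (I : Set B) (Θ : Set (Set B)) (F : Set B → Set (Set (B × G))), IsSPC I Θ F →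
      IsInvariantCrossSection (spcToCS I Θ F).1 (spcToCS I Θ F).2) ∧
    -- the two maps are mutually inverse
    (∀ (Y : Set (G × B)) (P : Set (Set (G × B))), IsInvariantCrossSection Y P →
      spcToCS (csToSPC Y P).1 (csToSPC Y P).2.1 (csToSPC Y P).2.2 = (Y, P)) ∧
    (∀ (I : Set B) (Θ : Set (Set B)) (F : Set B → Set (Set (B × G))), IsSPC I Θ F →
      csToSPC (spcToCS I Θ F).1 (spcToCS I Θ F).2 = (I, Θ, F)) ∧
    -- the forward map is an order isomorphism
    (∀ (Y : Set (G × B)) (P : Set (Set (G × B)))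
       (Y' : Set (G × B)) (P' : Set (Set (G × B))),
      IsInvariantCrossSection Y P → IsInvariantCrossSection Y' P' →
        (SPle Y P Y' P' ↔
          SPCle (csToSPC Y P).1 (csToSPC Y P).2.1 (csToSPC Y P).2.2
            (csToSPC Y' P').1 (csToSPC Y' P').2.1 (csToSPC Y' P').2.2)) :=
  cs_orderIso_rhodes_general G B
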